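/- arXiv:1110.2712 — 2 statements merged into one kernel-verified Lean document; each statement's English description precedes it below -/
import Mathlib

section
/- (A knight moving just before a different lout never takes the lout's favourite.) Suppose t < m is a turn such that: the preference ≺_t at turn t is a strict partial order extending the knight order <K_{P t}; every turn u with t < u ≤ m has preference ≺_u = <L_{P u} (lout turns); and the players P t and P (t+1) are distinct. Then in every SPE s and every history h of length t−1, the prescribed choice s(h) is NOT the <_{P (t+1)}-maximum element of the set of morsels not occurring in h. -/
/-- The plate of player `i` under play sequence `a`, with turn order `P`. -/
def plate {M : Type*} [DecidableEq M] {m k : ℕ} (P : Fin m → Fin k) (a : Fin m → M)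
    (i : Fin k) : Finset M :=
  (Finset.univ.filter fun t => P t = i).image a

/-- Pairwise comparison of plates with respect to a morsel ordering `le`. -/
def PlateLE {M : Type*} (le : M → M → Prop) (A B : Finset M) : Prop :=
  ∃ f : A → B, Function.Bijective f ∧ ∀ x : A, le x.1 (f x).1

/-- Strict pairwise comparison of plates. -/
def PlateLT {M : Type*} (le : M → M → Prop) (A B : Finset M) : Prop :=
  PlateLE le A B ∧ A ≠ B

/-- The knight order of player `i` on play sequences. -/
def KnightLT {M : Type*} [DecidableEq M] {m k : ℕ} (P : Fin m → Fin k)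
    (ord : Fin k → LinearOrder M) (i : Fin k) (a b : Fin m → M) : Prop :=
  ((∀ j, j ≠ i → PlateLE (ord j).le (plate P a j) (plate P b j)) ∧
      ∃ j, j ≠ i ∧ PlateLT (ord j).le (plate P a j) (plate P b j)) ∨
    ((∀ j, j ≠ i → plate P a j = plate P b j) ∧
      PlateLT (ord i).le (plate P a i) (plate P b i))

/-- The lout order of player `i` on play sequences. -/
def LoutLT {M : Type*} {m k : ℕ} (P : Fin m → Fin k)
    (ord : Fin k → LinearOrder M) (i : Fin k) (a b : Fin m → M) : Prop :=
  ∃ t : Fin m, P t = i ∧ (∀ s : Fin m, s < t → a s = b s) ∧ (ord i).lt (a t) (b t)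

/-- A strategy profile: assigns to each duplicate-free history of length `< m` a
morsel not occurring in it. -/
structure Strategy (M : Type*) (m : ℕ) where
  choice : List M → M
  valid : ∀ h : List M, h.Nodup → h.length < m → choice h ∉ h

/-- Iteratively extend a history by the choices prescribed by `s`. -/
def Strategy.extend {M : Type*} {m : ℕ} (s : Strategy M m) : ℕ → List M → List M
  | 0, h => h
  | j + 1, h => Strategy.extend s j (h ++ [s.choice h])

/-- The contingent outcome of strategy profile `s` from history `h`, as a play
sequence. -/
def Strategy.play {M : Type*} {m : ℕ} (s : Strategy M m) (h : List M) : Fin m → M :=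
  fun t => (s.extend (m - h.length) h).getD t.val (s.choice [])

/-- Subgame perfect equilibrium with respect to preferences `pref t` at turn `t`. -/
def SPE {M : Type*} {m : ℕ}
    (pref : Fin m → (Fin m → M) → (Fin m → M) → Prop) (s : Strategy M m) : Prop :=
  ∀ t : Fin m, ∀ h : List M, h.Nodup → h.length = t.val →
    ∀ x : M, x ∉ h → ¬ pref t (s.play h) (s.play (h ++ [x]))

/-- Optimal plays: contingent outcomes of subgame perfect equilibria from the
empty history. -/
def OptimalPlay {M : Type*} {m : ℕ}
    (pref : Fin m → (Fin m → M) → (Fin m → M) → Prop) (a : Fin m → M) : Prop :=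
  ∃ s : Strategy M m, SPE pref s ∧ a = s.play []

/-- The greedy play: at each turn `t` the mover `P t` selects her favourite
remaining morsel. -/
def IsGreedy {M : Type*} {m k : ℕ} (P : Fin m → Fin k) (ord : Fin k → LinearOrder M)
    (a : Fin m → M) : Prop :=
  Function.Injective a ∧
    ∀ t : Fin m, ∀ x : M, (∀ s : Fin m, s < t → a s ≠ x) → x ≠ a t →
      (ord (P t)).lt x (a t)

section Aux
variable {M : Type*} {m : ℕ} (s : Strategy M m)

theorem Strategy.extend_succ (j : ℕ) (h : List M) :
    s.extend (j + 1) h = s.extend j (h ++ [s.choice h]) := rfl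

theorem Strategy.extend_length (j : ℕ) : ∀ h : List M, (s.extend j h).length = h.length + j := by
  induction j with
  | zero => intro h; rfl
  | succ j ih =>
    intro h
    rw [s.extend_succ, ih]
    simp only [List.length_append, List.length_singleton]
    omega

theorem nodup_concat {h : List M} {c : M} (hn : h.Nodup) (hc : c ∉ h) : (h ++ [c]).Nodup := by
  rw [List.nodup_append]
  exact ⟨hn, List.nodup_singleton _, fun a ha b hb hab => hc (by rw [List.mem_singleton.mp hb] at hab; rw [← hab]; exact ha)⟩

theorem Strategy.extend_nodup (j : ℕ) : ∀ h : List M, h.Nodup → h.length + j ≤ m →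
    (s.extend j h).Nodup := by
  induction j with
  | zero => intro h hn _; exact hn
  | succ j ih =>
    intro h hn hl
    have hv := s.valid h hn (by omega)
    refine ih _ (nodup_concat hn hv)
      (by simp only [List.length_append, List.length_singleton]; omega)

theorem Strategy.extend_getD (j : ℕ) : ∀ (h : List M) (i : ℕ) (d : M), i < h.length →
    (s.extend j h).getD i d = h.getD i d := by
  induction j with
  | zero => intros; rfl
  | succ j ih =>
    intro h i d hi
    rw [s.extend_succ, ih _ i d (by simp only [List.length_append, List.length_singleton]; omega),
      List.getD_append _ _ _ _ hi]

theorem getD_concat (h : List M) (c d : M) : (h ++ [c]).getD h.length d = c := by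
  rw [List.getD_append_right _ _ _ _ le_rfl, Nat.sub_self]
  rfl

theorem Strategy.play_lt (h : List M) (u : Fin m) (hu : u.val < h.length) :
    s.play h u = h.getD u.val (s.choice []) :=
  s.extend_getD _ _ _ _ hu

theorem Strategy.play_choice (h : List M) (u : Fin m) (hu : h.length = u.val) :
    s.play h u = s.choice h := by
  have hum := u.isLt
  have h1 : m - h.length = (m - h.length - 1) + 1 := by omega
  show (s.extend (m - h.length) h).getD u.val (s.choice []) = s.choice h
  rw [h1, s.extend_succ,
    s.extend_getD _ _ _ _ (by simp only [List.length_append, List.length_singleton]; omega),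
    ← hu, getD_concat]

theorem Strategy.play_inj (h : List M) (hn : h.Nodup) (hl : h.length ≤ m) :
    Function.Injective (s.play h) := by
  intro u v huv
  have hL : (s.extend (m - h.length) h).length = m := by rw [s.extend_length]; omega
  have hN := s.extend_nodup (m - h.length) h hn (by omega)
  have hu := u.isLt
  have hv := v.isLt
  apply Fin.ext
  rw [show s.play h u = (s.extend (m - h.length) h).getD u.val (s.choice []) from rfl,
      show s.play h v = (s.extend (m - h.length) h).getD v.val (s.choice []) from rfl,
      List.getD_eq_getElem _ _ (by omega), List.getD_eq_getElem _ _ (by omega)] at huv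
  exact (List.Nodup.getElem_inj_iff hN).mp huv

end Aux

/-- At a lout turn, SPE forces the mover's choice to be her favourite remaining morsel. -/
theorem lout_greedy {M : Type*} {m k : ℕ} {P : Fin m → Fin k}
    {ord : Fin k → LinearOrder M} {pref : Fin m → (Fin m → M) → (Fin m → M) → Prop}
    {s : Strategy M m} (hs : SPE pref s) (u : Fin m) (g : List M)
    (hg : g.Nodup) (hl : g.length = u.val) (hp : pref u = LoutLT P ord (P u)) :
    ∀ x : M, x ∉ g → (ord (P u)).le x (s.choice g) := by
  intro x hx
  by_contra hlt
  letI := ord (P u)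
  have hlt' : s.choice g < x := not_le.mp hlt
  apply hs u g hg hl x hx
  rw [hp]
  refine ⟨u, rfl, fun v hv => ?_, ?_⟩
  · have hv' : v.val < u.val := hv
    rw [s.play_lt g v (by omega), s.play_lt (g ++ [x]) v
        (by simp only [List.length_append, List.length_singleton]; omega),
      List.getD_append _ _ _ _ (by omega)]
  · rw [s.play_choice g u hl, s.play_lt (g ++ [x]) u
        (by simp only [List.length_append, List.length_singleton]; omega), ← hl, getD_concat]
    exact hlt'

/-- Two histories with the same length and same set of morsels, followed only by
lout turns, are extended by the same tail under an SPE. -/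
theorem tail_common {M : Type*} [DecidableEq M] {m k : ℕ} (P : Fin m → Fin k)
    (ord : Fin k → LinearOrder M) (pref : Fin m → (Fin m → M) → (Fin m → M) → Prop)
    (s : Strategy M m) (hs : SPE pref s) :
    ∀ (j : ℕ) (g1 g2 : List M), g1.Nodup → g2.Nodup → g1.length = g2.length →
      g1.toFinset = g2.toFinset →
      (∀ u : Fin m, g1.length ≤ u.val → pref u = LoutLT P ord (P u)) →
      g1.length + j ≤ m →
      ∃ l : List M, s.extend j g1 = g1 ++ l ∧ s.extend j g2 = g2 ++ l := by
  intro j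
  induction j with
  | zero => intro g1 g2 _ _ _ _ _ _; exact ⟨[], by simp [Strategy.extend], by simp [Strategy.extend]⟩
  | succ j ih =>
    intro g1 g2 h1 h2 hlen hset hpref hle
    have hlm : g1.length < m := by omega
    have hp := hpref ⟨g1.length, hlm⟩ le_rfl
    have hc1 : s.choice g1 ∉ g1 := s.valid g1 h1 hlm
    have hc2 : s.choice g2 ∉ g2 := s.valid g2 h2 (by rw [← hlen]; exact hlm)
    have hmem : ∀ z : M, z ∈ g1 ↔ z ∈ g2 := by
      intro z; rw [← List.mem_toFinset, ← List.mem_toFinset, hset]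
    have h12 : (ord (P ⟨g1.length, hlm⟩)).le (s.choice g1) (s.choice g2) :=
      lout_greedy hs ⟨g1.length, hlm⟩ g2 h2 hlen.symm hp (s.choice g1)
        (fun c => hc1 ((hmem _).mpr c))
    have h21 : (ord (P ⟨g1.length, hlm⟩)).le (s.choice g2) (s.choice g1) :=
      lout_greedy hs ⟨g1.length, hlm⟩ g1 h1 rfl hp (s.choice g2)
        (fun c => hc2 ((hmem _).mp c))
    have hcc : s.choice g1 = s.choice g2 := by
      letI := ord (P ⟨g1.length, hlm⟩)
      exact le_antisymm h12 h21
    obtain ⟨l, e1, e2⟩ := ih (g1 ++ [s.choice g1]) (g2 ++ [s.choice g1])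
      (nodup_concat h1 hc1) (nodup_concat h2 (fun c => hc1 ((hmem _).mpr c)))
      (by simp [hlen]) (by simp [List.toFinset_append, hset])
      (fun u hu => hpref u (by simp only [List.length_append, List.length_singleton] at hu; omega))
      (by simp only [List.length_append, List.length_singleton]; omega)
    refine ⟨s.choice g1 :: l, ?_, ?_⟩
    · rw [s.extend_succ, e1]; simp
    · rw [s.extend_succ, ← hcc, e2]; simp

theorem plateLE_of_eq {M : Type*} (le : M → M → Prop) (hr : ∀ z, le z z) {A B : Finset M}
    (h : A = B) : PlateLE le A B := by
  subst h
  exact ⟨id, Function.bijective_id, fun z => hr z.1⟩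

theorem plateLE_insert {M : Type*} [DecidableEq M] (L : LinearOrder M) (T : Finset M) (y x : M)
    (hy : y ∉ T) (hx : x ∉ T) (hle : L.le y x) :
    PlateLE L.le (insert y T) (insert x T) := by
  letI := L
  refine ⟨fun z => if h : z.1 = y then ⟨x, Finset.mem_insert_self _ _⟩
    else ⟨z.1, Finset.mem_insert_of_mem (by
      rcases Finset.mem_insert.mp z.2 with h' | h'
      · exact absurd h' h
      · exact h')⟩, ⟨?_, ?_⟩, ?_⟩
  · intro z1 z2 hz
    dsimp only at hz
    by_cases h1 : z1.1 = y <;> by_cases h2 : z2.1 = y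
    · exact Subtype.ext (h1.trans h2.symm)
    · rw [dif_pos h1, dif_neg h2] at hz
      have hv : x = z2.1 := congrArg Subtype.val hz
      have hT : z2.1 ∈ T := by
        rcases Finset.mem_insert.mp z2.2 with h' | h'
        · exact absurd h' h2
        · exact h'
      exact absurd (show x ∈ T by rw [hv]; exact hT) hx
    · rw [dif_neg h1, dif_pos h2] at hz
      have hv : z1.1 = x := congrArg Subtype.val hz
      have hT : z1.1 ∈ T := by
        rcases Finset.mem_insert.mp z1.2 with h' | h'
        · exact absurd h' h1
        · exact h'
      exact absurd (hv ▸ hT) hx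
    · rw [dif_neg h1, dif_neg h2] at hz
      have hv := congrArg Subtype.val hz
      exact Subtype.ext hv
  · intro w
    by_cases hw : w.1 = x
    · refine ⟨⟨y, Finset.mem_insert_self _ _⟩, ?_⟩
      dsimp only
      rw [dif_pos rfl]
      exact Subtype.ext hw.symm
    · have hwT : w.1 ∈ T := by
        rcases Finset.mem_insert.mp w.2 with h' | h'
        · exact absurd h' hw
        · exact h'
      have hwy : w.1 ≠ y := fun c => hy (c ▸ hwT)
      refine ⟨⟨w.1, Finset.mem_insert_of_mem hwT⟩, ?_⟩
      dsimp only
      rw [dif_neg hwy]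
  · intro z
    by_cases h1 : z.1 = y
    · dsimp only
      rw [dif_pos h1, h1]
      exact hle
    · dsimp only
      rw [dif_neg h1]

/-- a knight moving just before a (different) lout, with only lout
turns remaining, never takes the lout's favourite remaining morsel. -/
theorem knight_avoids_lout_favourite {M : Type*} [Fintype M] [DecidableEq M]
    {m k : ℕ} (hm : m ≤ Fintype.card M) (P : Fin m → Fin k)
    (ord : Fin k → LinearOrder M) (t : Fin m) (ht : t.val + 1 < m)
    (pref : Fin m → (Fin m → M) → (Fin m → M) → Prop)
    (hirr : ∀ a : Fin m → M, Function.Injective a → ¬ pref t a a)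
    (htrans : ∀ a b c : Fin m → M, Function.Injective a → Function.Injective b →
      Function.Injective c → pref t a b → pref t b c → pref t a c)
    (hext : ∀ a b : Fin m → M, Function.Injective a → Function.Injective b →
      KnightLT P ord (P t) a b → pref t a b)
    (hlout : ∀ u : Fin m, t < u → pref u = LoutLT P ord (P u))
    (hne : P t ≠ P ⟨t.val + 1, ht⟩)
    (s : Strategy M m) (hs : SPE pref s) :
    ∀ h : List M, h.Nodup → h.length = t.val →
      ¬ ∀ x : M, x ∉ h → (ord (P ⟨t.val + 1, ht⟩)).le x (s.choice h) := by
  intro h hnd hlen Hmax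
  set t1 : Fin m := ⟨t.val + 1, ht⟩ with ht1def
  have htm := t.isLt
  have hlm : h.length < m := by omega
  set x := s.choice h with hxdef
  have hxh : x ∉ h := s.valid h hnd hlm
  have hnd1 : (h ++ [x]).Nodup := nodup_concat hnd hxh
  have hl1 : (h ++ [x]).length = t.val + 1 := by simp [hlen]
  set y := s.choice (h ++ [x]) with hydef
  have hyh1 : y ∉ h ++ [x] := s.valid _ hnd1 (by rw [hl1]; exact ht)
  have hyh : y ∉ h := fun c => hyh1 (List.mem_append_left _ c)
  have hyx : y ≠ x := fun c => hyh1 (List.mem_append_right _ (by simp [c]))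
  have htlt : t < t1 := Fin.lt_def.mpr (Nat.lt_succ_self _)
  have hpt1 : pref t1 = LoutLT P ord (P t1) := hlout t1 htlt
  have hnd2 : (h ++ [y]).Nodup := nodup_concat hnd hyh
  have hl2 : (h ++ [y]).length = t.val + 1 := by simp [hlen]
  have hcx : s.choice (h ++ [y]) = x := by
    have hc2h : s.choice (h ++ [y]) ∉ h ++ [y] := s.valid _ hnd2 (by rw [hl2]; exact ht)
    have h1 : (ord (P t1)).le (s.choice (h ++ [y])) x :=
      Hmax _ (fun c => hc2h (List.mem_append_left _ c))
    have h2 : (ord (P t1)).le x (s.choice (h ++ [y])) :=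
      lout_greedy hs t1 (h ++ [y]) hnd2 (by rw [hl2, ht1def]) hpt1 x (by
        intro hc
        rcases List.mem_append.mp hc with hc | hc
        · exact hxh hc
        · exact hyx ((List.mem_singleton.mp hc).symm))
    letI := ord (P t1)
    exact le_antisymm h1 h2
  have e1 : s.extend (m - h.length) h = s.extend (m - t.val - 2) ((h ++ [x]) ++ [y]) := by
    have hh : m - h.length = (m - t.val - 2) + 1 + 1 := by omega
    rw [hh, s.extend_succ, s.extend_succ, ← hxdef, ← hydef]
  have e2 : s.extend (m - (h ++ [y]).length) (h ++ [y])
      = s.extend (m - t.val - 2) ((h ++ [y]) ++ [x]) := by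
    have hh : m - (h ++ [y]).length = (m - t.val - 2) + 1 := by rw [hl2]; omega
    rw [hh, s.extend_succ, hcx]
  have hnd12 : ((h ++ [x]) ++ [y]).Nodup := nodup_concat hnd1 hyh1
  have hnd21 : ((h ++ [y]) ++ [x]).Nodup := nodup_concat hnd2 (by
    intro hc
    rcases List.mem_append.mp hc with hc | hc
    · exact hxh hc
    · exact hyx ((List.mem_singleton.mp hc).symm))
  obtain ⟨l, E1, E2⟩ := tail_common P ord pref s hs (m - t.val - 2)
    ((h ++ [x]) ++ [y]) ((h ++ [y]) ++ [x]) hnd12 hnd21 (by simp)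
    (by ext z; simp; tauto)
    (fun u hu => hlout u (by
      rw [Fin.lt_def]
      simp only [List.length_append, List.length_singleton] at hu
      omega))
    (by simp only [List.length_append, List.length_singleton]; omega)
  have haval : ∀ u : Fin m, s.play h u = (((h ++ [x]) ++ [y]) ++ l).getD u.val (s.choice []) := by
    intro u
    show (s.extend (m - h.length) h).getD u.val (s.choice []) = _
    rw [e1, E1]
  have hbval : ∀ u : Fin m,
      s.play (h ++ [y]) u = (((h ++ [y]) ++ [x]) ++ l).getD u.val (s.choice []) := by
    intro u
    show (s.extend (m - (h ++ [y]).length) (h ++ [y])).getD u.val (s.choice []) = _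
    rw [e2, E2]
  have hat1 : s.play h t1 = y := by
    rw [haval t1,
      List.getD_append (h ++ [x] ++ [y]) l _ t1.val (show t.val + 1 < (h ++ [x] ++ [y]).length by simp only [List.length_append, List.length_singleton]; rw [hlen]; exact Nat.lt_succ_self _)]
    have hh : t1.val = (h ++ [x]).length := by rw [hl1, ht1def]
    rw [hh, getD_concat]
  have hbt1 : s.play (h ++ [y]) t1 = x := by
    rw [hbval t1,
      List.getD_append (h ++ [y] ++ [x]) l _ t1.val (show t.val + 1 < (h ++ [y] ++ [x]).length by simp only [List.length_append, List.length_singleton]; rw [hlen]; exact Nat.lt_succ_self _)]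
    have hh : t1.val = (h ++ [y]).length := by rw [hl2, ht1def]
    rw [hh, getD_concat]
  have hab : ∀ u : Fin m, u ≠ t → u ≠ t1 → s.play h u = s.play (h ++ [y]) u := by
    intro u hut hut1
    have h1 : u.val ≠ t.val := fun c => hut (Fin.ext c)
    have h2 : u.val ≠ t.val + 1 := fun c => hut1 (Fin.ext (by rw [ht1def]; exact c))
    rw [haval u, hbval u]
    rcases lt_or_ge u.val h.length with hu | hu
    · rw [List.getD_append (h ++ [x] ++ [y]) l _ _
          (by simp only [List.length_append, List.length_singleton]; omega),
        List.getD_append (h ++ [y] ++ [x]) l _ _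
          (by simp only [List.length_append, List.length_singleton]; omega),
        List.getD_append (h ++ [x]) [y] _ _
          (by simp only [List.length_append, List.length_singleton]; omega),
        List.getD_append (h ++ [y]) [x] _ _
          (by simp only [List.length_append, List.length_singleton]; omega),
        List.getD_append h [x] _ _ hu, List.getD_append h [y] _ _ hu]
    · have hu2 : h.length + 2 ≤ u.val := by omega
      rw [List.getD_append_right (h ++ [x] ++ [y]) l _ _
          (by simp only [List.length_append, List.length_singleton]; omega),
        List.getD_append_right (h ++ [y] ++ [x]) l _ _
          (by simp only [List.length_append, List.length_singleton]; omega)]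
      simp
  have hia : Function.Injective (s.play h) := s.play_inj h hnd (by omega)
  have hib : Function.Injective (s.play (h ++ [y])) := s.play_inj _ hnd2 (by rw [hl2]; omega)
  have ht1S : t1 ∈ Finset.univ.filter (fun u => P u = P t1) := by simp
  set T : Finset M := ((Finset.univ.filter fun u => P u = P t1).erase t1).image (s.play h)
    with hTdef
  have hTb : T = ((Finset.univ.filter fun u => P u = P t1).erase t1).image (s.play (h ++ [y])) := by
    rw [hTdef]
    apply Finset.image_congr
    intro u hu
    simp only [Finset.coe_erase, Set.mem_diff, Finset.mem_coe, Finset.mem_filter,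
      Finset.mem_univ, true_and, Set.mem_singleton_iff] at hu
    exact hab u (fun c => hne (by rw [← c]; exact hu.1)) hu.2
  have hplA : plate P (s.play h) (P t1) = insert y T := by
    unfold plate
    rw [← Finset.insert_erase ht1S, Finset.image_insert, hat1]
  have hplB : plate P (s.play (h ++ [y])) (P t1) = insert x T := by
    unfold plate
    rw [← Finset.insert_erase ht1S, Finset.image_insert, hbt1, hTb]
  have hyT : y ∉ T := by
    rw [hTdef]
    intro hyT
    simp only [Finset.mem_image, Finset.mem_erase, Finset.mem_filter, Finset.mem_univ,
      true_and] at hyT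
    obtain ⟨u, ⟨hu1, _⟩, hu3⟩ := hyT
    exact hu1 (hia (hu3.trans hat1.symm))
  have hxT : x ∉ T := by
    rw [hTb]
    intro hxT
    simp only [Finset.mem_image, Finset.mem_erase, Finset.mem_filter, Finset.mem_univ,
      true_and] at hxT
    obtain ⟨u, ⟨hu1, _⟩, hu3⟩ := hxT
    exact hu1 (hib (hu3.trans hbt1.symm))
  have hylex : (ord (P t1)).le y x := Hmax y hyh
  have hK : KnightLT P ord (P t) (s.play h) (s.play (h ++ [y])) := by
    left
    constructor
    · intro j' hj'
      by_cases hjj : j' = P t1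
      · subst hjj
        rw [hplA, hplB]
        exact plateLE_insert (ord (P t1)) T y x hyT hxT hylex
      · refine plateLE_of_eq _ (fun z => (ord j').le_refl z) ?_
        unfold plate
        apply Finset.image_congr
        intro u hu
        simp only [Finset.coe_filter, Finset.mem_univ, true_and, Set.mem_setOf_eq] at hu
        refine hab u (fun c => hj' ?_) (fun c => hjj ?_)
        · rw [← hu, c]
        · rw [← hu, c]
    · refine ⟨P t1, Ne.symm hne, ?_, ?_⟩
      · rw [hplA, hplB]
        exact plateLE_insert (ord (P t1)) T y x hyT hxT hylex
      · rw [hplA, hplB]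
        intro c
        have hx' : x ∈ insert y T := c ▸ Finset.mem_insert_self x T
        rcases Finset.mem_insert.mp hx' with hc | hc
        · exact hyx hc.symm
        · exact hxT hc
  exact hs t h hnd hlen y hyh (hext _ _ hia hib hK)
end

section
/- (Complement duality for pairwise comparison.) For a linear order ≤ on a finite type M and finsets A, B ⊆ M with |A| = |B|: A ≤pc B if and only if (univ \ B) ≤pc (univ \ A), where univ is the finset of all elements of M. -/
section Aux
variable {M : Type*} [DecidableEq M] [LinearOrder M]

omit [DecidableEq M] [LinearOrder M] in
lemma card_filter_eq_card_subtype_filter (B : Finset M) (p : M → Prop) [DecidablePred p] :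
    (B.filter p).card = ((Finset.univ : Finset ↥B).filter (fun b => p b.1)).card := by
  refine Finset.card_bij (fun b hb => ⟨b, (Finset.mem_filter.mp hb).1⟩) ?_ ?_ ?_
  · intro b hb
    simp [Finset.mem_filter.mp hb |>.2]
  · intro a ha b hb hab
    simpa using congrArg Subtype.val hab
  · intro b hb
    refine ⟨b.1, ?_, rfl⟩
    simp at hb
    simp [b.2, hb]

lemma plateLE_iff_count (A B : Finset M) (h : A.card = B.card) :
    PlateLE (· ≤ ·) A B ↔
      ∀ x : M, (A.filter (x ≤ ·)).card ≤ (B.filter (x ≤ ·)).card := by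
  constructor
  · rintro ⟨f, hbij, hle⟩ x
    rw [card_filter_eq_card_subtype_filter A, card_filter_eq_card_subtype_filter B]
    refine Finset.card_le_card_of_injOn f ?_ ?_
    · intro a ha
      simp only [Finset.mem_coe, Finset.mem_filter, Finset.mem_univ, true_and] at ha ⊢
      exact le_trans ha (hle a)
    · intro a _ b _ hab
      exact hbij.1 hab
  · intro hcount
    have hall : ∀ S : Finset ↥A,
        S.card ≤ (S.biUnion (fun a => (Finset.univ : Finset ↥B).filter
          (fun b => a.1 ≤ b.1))).card := by
      intro S
      rcases S.eq_empty_or_nonempty with rfl | hS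
      · simp
      · set a₀ := S.min' hS with ha₀
        have h1 : S.card ≤ (A.filter (a₀.1 ≤ ·)).card := by
          refine Finset.card_le_card_of_injOn (fun a => a.1) ?_ ?_
          · intro a ha
            simp only [Finset.mem_coe, Finset.mem_filter]
            exact ⟨a.2, S.min'_le a ha⟩
          · intro a _ b _ hab
            exact Subtype.ext hab
        have h2 : (B.filter (a₀.1 ≤ ·)).card ≤ (S.biUnion (fun a =>
            (Finset.univ : Finset ↥B).filter (fun b => a.1 ≤ b.1))).card := by
          rw [card_filter_eq_card_subtype_filter B]
          refine Finset.card_le_card ?_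
          intro b hb
          simp only [Finset.mem_filter, Finset.mem_univ, true_and] at hb
          exact Finset.mem_biUnion.mpr ⟨a₀, S.min'_mem hS, by simp [hb]⟩
        exact le_trans h1 (le_trans (hcount a₀.1) h2)
    obtain ⟨f, hinj, hf⟩ :=
      (Finset.all_card_le_biUnion_card_iff_exists_injective _).mp hall
    have hbij : Function.Bijective f := by
      rw [Fintype.bijective_iff_injective_and_card]
      simp [hinj, h]
    refine ⟨f, hbij, fun a => ?_⟩
    have := hf a
    simp only [Finset.mem_filter, Finset.mem_univ, true_and] at this
    exact this
end Aux

/-- complement duality: for plates of equal size, `A ≤pc B` iff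
the complement of `B` pairwise-compares below the complement of `A`. -/
theorem pairwise_comparison_compl {M : Type*} [Fintype M] [DecidableEq M]
    [LinearOrder M] (A B : Finset M) (h : A.card = B.card) :
    PlateLE (· ≤ ·) A B ↔
      PlateLE (· ≤ ·) (Finset.univ \ B) (Finset.univ \ A) := by
  have hc : (Finset.univ \ B).card = (Finset.univ \ A).card := by
    rw [Finset.card_sdiff_of_subset (Finset.subset_univ _), Finset.card_sdiff_of_subset (Finset.subset_univ _), h]
  rw [plateLE_iff_count A B h, plateLE_iff_count _ _ hc]
  have key : ∀ (C : Finset M) (x : M),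
      ((Finset.univ \ C).filter (x ≤ ·)).card =
        (Finset.univ.filter (x ≤ ·)).card - (C.filter (x ≤ ·)).card := by
    intro C x
    have hsub : C.filter (x ≤ ·) ⊆ Finset.univ.filter (x ≤ ·) :=
      Finset.filter_subset_filter _ (Finset.subset_univ _)
    rw [← Finset.card_sdiff_of_subset hsub]
    congr 1
    ext y
    simp only [Finset.mem_filter, Finset.mem_sdiff, Finset.mem_univ, true_and]
    tauto
  constructor
  · intro hle x
    rw [key, key]
    have hA : (A.filter (x ≤ ·)).card ≤ (Finset.univ.filter (x ≤ ·)).card :=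
      Finset.card_le_card (Finset.filter_subset_filter _ (Finset.subset_univ _))
    have hB : (B.filter (x ≤ ·)).card ≤ (Finset.univ.filter (x ≤ ·)).card :=
      Finset.card_le_card (Finset.filter_subset_filter _ (Finset.subset_univ _))
    have := hle x
    omega
  · intro hle x
    have hA : (A.filter (x ≤ ·)).card ≤ (Finset.univ.filter (x ≤ ·)).card :=
      Finset.card_le_card (Finset.filter_subset_filter _ (Finset.subset_univ _))
    have hB : (B.filter (x ≤ ·)).card ≤ (Finset.univ.filter (x ≤ ·)).card :=
      Finset.card_le_card (Finset.filter_subset_filter _ (Finset.subset_univ _))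
    have := hle x
    rw [key, key] at this
    omega
end
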